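/- Fix χ, Θ, σ > 0. There exist constants 𝒞 > 0 and C > 0, depending only on χ, Θ, σ, such that for every zero-mean h ∈ A¹(𝕋) with ‖h‖_{A¹} ≤ 𝒞, there exists a unique zero-mean U ∈ A³(𝕋) satisfying L_h U = N(h), and this U obeys the bound ‖U‖_{A⁰} + (Θ tanh(1)/2) ‖U‖_{A³} ≤ C ‖h‖_{A¹} (1 + ‖h‖_{A¹}). -/

import Mathlib

open scoped BigOperators
open MeasureTheory Filter

noncomputable section

/-- A zero-mean periodic function, identified with its sequence of Fourier coefficients. -/
abbrev Coeffs := ℤ → ℂ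

/-- Wiener norm `‖f‖_{A^s} = Σ_k |k|^s |f̂(k)|`. -/
def Anorm (s : ℝ) (f : Coeffs) : ℝ :=
  ∑' k : ℤ, |(k : ℝ)| ^ s * ‖f k‖

/-- Membership in the Wiener space `A^s`. -/
def InA (s : ℝ) (f : Coeffs) : Prop :=
  Summable fun k : ℤ => |(k : ℝ)| ^ s * ‖f k‖

/-- `G₀ = Λ tanh Λ`, the Fourier multiplier with symbol `|k| tanh |k|`. -/
def G0 (f : Coeffs) : Coeffs := fun k =>
  ((|(k : ℝ)| * Real.tanh |(k : ℝ)| : ℝ) : ℂ) * f k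

/-- The `n`-th spatial derivative `∂ₓⁿ`, i.e. the multiplier with symbol `(i k)^n`. -/
def Dx (n : ℕ) (f : Coeffs) : Coeffs := fun k =>
  (Complex.I * (k : ℂ)) ^ n * f k

/-- Product of periodic functions = convolution of Fourier coefficient sequences. -/
def conv (f g : Coeffs) : Coeffs := fun k => ∑' m : ℤ, f m * g (k - m)

/-- `L₀ = 1 - Θ G₀ ∂ₓₓ`, the multiplier with symbol `1 + Θ |k|³ tanh |k|`. -/
def L0 (Θ : ℝ) (f : Coeffs) : Coeffs := fun k =>
  ((1 + Θ * |(k : ℝ)| ^ (3 : ℕ) * Real.tanh |(k : ℝ)| : ℝ) : ℂ) * f k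

/-- `L₀⁻¹`, the multiplier with symbol `(1 + Θ |k|³ tanh |k|)⁻¹`. -/
def L0inv (Θ : ℝ) (f : Coeffs) : Coeffs := fun k =>
  f k / ((1 + Θ * |(k : ℝ)| ^ (3 : ℕ) * Real.tanh |(k : ℝ)| : ℝ) : ℂ)

/-- `I(h,V) = G₀(h · G₀ ∂ₓₓ V) + ∂ₓ(h · ∂ₓₓₓ V)`. -/
def Iop (h V : Coeffs) : Coeffs := fun k =>
  G0 (conv h (G0 (Dx 2 V))) k + Dx 1 (conv h (Dx 3 V)) k

/-- `I(h,V)` given directly by its Fourier coefficient formula. -/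
def IopF (h V : Coeffs) : Coeffs := fun k =>
  ∑' m : ℤ,
    ((|(k : ℝ)| * |((k - m : ℤ) : ℝ)| ^ (3 : ℕ) *
      ((Int.sign k : ℝ) * (Int.sign (k - m) : ℝ) -
        Real.tanh |(k : ℝ)| * Real.tanh |((k - m : ℤ) : ℝ)|) : ℝ) : ℂ) *
      h m * V (k - m)

/-- The sign-interaction part `I_A`. -/
def IA (h V : Coeffs) : Coeffs := fun k =>
  ∑' m : ℤ,
    ((|(k : ℝ)| * |((k - m : ℤ) : ℝ)| ^ (3 : ℕ) *
      ((Int.sign k : ℝ) * (Int.sign (k - m) : ℝ) - 1) : ℝ) : ℂ) *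
      h m * V (k - m)

/-- The smooth-remainder part `I_B`. -/
def IB (h V : Coeffs) : Coeffs := fun k =>
  ∑' m : ℤ,
    ((|(k : ℝ)| * |((k - m : ℤ) : ℝ)| ^ (3 : ℕ) *
      (1 - Real.tanh |(k : ℝ)| * Real.tanh |((k - m : ℤ) : ℝ)|) : ℝ) : ℂ) *
      h m * V (k - m)

/-- For a given profile `h`, the operator `L_h U = L₀ U + σ Θ I(h,U)`. -/
def Lop (Θ σ : ℝ) (h U : Coeffs) : Coeffs := fun k =>
  L0 Θ U k + ((σ * Θ : ℝ) : ℂ) * Iop h U k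

/-- `N(h) = -χ G₀ h + σχ (G₀(h · G₀ h) + ∂ₓ(h · ∂ₓ h))`. -/
def Nop (χ σ : ℝ) (h : Coeffs) : Coeffs := fun k =>
  -(χ : ℂ) * G0 h k +
    ((σ * χ : ℝ) : ℂ) * (G0 (conv h (G0 h)) k + Dx 1 (conv h (Dx 1 h)) k)

/-- `N_λ(h)`, the weakly nonlinear right-hand side with elasticity. -/
def Nlam (lam χ σ : ℝ) (h : Coeffs) : Coeffs := fun k =>
  -(χ : ℂ) * G0 h k - ((lam / 4 : ℝ) : ℂ) * G0 (Dx 4 h) k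
    + ((σ * χ : ℝ) : ℂ) * (G0 (conv h (G0 h)) k + Dx 1 (conv h (Dx 1 h)) k)
    + ((σ * lam / 4 : ℝ) : ℂ) *
        (G0 (conv h (G0 (Dx 4 h))) k + Dx 1 (conv h (Dx 5 h)) k)

/-- Fourier projection onto modes `|k| ≤ N`. -/
def PN (N : ℕ) (f : Coeffs) : Coeffs := fun k => if |k| ≤ (N : ℤ) then f k else 0

/-- Truncated nonlinearity `F_N(h)` of the Galerkin approximation. -/
def FN (lam χ σ : ℝ) (N : ℕ) (h : Coeffs) : Coeffs := fun k =>
  -(χ : ℂ) * G0 h k - ((lam / 4 : ℝ) : ℂ) * G0 (Dx 4 (PN N h)) k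
    + ((σ * χ : ℝ) : ℂ) * (G0 (conv h (G0 h)) k + Dx 1 (conv h (Dx 1 h)) k)
    + ((σ * lam / 4 : ℝ) : ℂ) *
        (G0 (conv h (G0 (Dx 4 (PN N h)))) k + Dx 1 (conv h (Dx 5 (PN N h))) k)

/-- `μ = L₀⁻¹(-χ G₀ h - (λ/4) G₀ ∂ₓ⁴ h)`. -/
def muOf (lam χ Θ : ℝ) (h : Coeffs) : Coeffs :=
  L0inv Θ (fun k => -(χ : ℂ) * G0 h k - ((lam / 4 : ℝ) : ℂ) * G0 (Dx 4 h) k)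

/-- Right-hand side of the second weakly nonlinear model (integrated form). -/
def RHS2 (lam χ Θ σ : ℝ) (h : Coeffs) : Coeffs :=
  L0inv Θ (fun k => Nlam lam χ σ h k - ((σ * Θ : ℝ) : ℂ) *
    (G0 (conv h (G0 (Dx 2 (muOf lam χ Θ h)))) k +
      Dx 1 (conv h (Dx 3 (muOf lam χ Θ h))) k))

/-- Thin-film operator `L_h U = U + √δ Θ ∂ₓ((1+εh) ∂ₓ³ U)`. -/
def Lthin (δ Θ ε : ℝ) (h U : Coeffs) : Coeffs := fun k =>
  U k + ((Real.sqrt δ * Θ : ℝ) : ℂ) *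
    Dx 1 (fun j => Dx 3 U j + (ε : ℂ) * conv h (Dx 3 U) j) k

/-- Thin-film nonlinearity `N_{δ,ε}(h) = √δ ∂ₓ((1+εh) ∂ₓ(χh + (λ/4)∂ₓ⁴h))`. -/
def Nthin (δ ε χ lam : ℝ) (h : Coeffs) : Coeffs :=
  fun k => ((Real.sqrt δ : ℝ) : ℂ) *
    Dx 1 (fun j =>
      Dx 1 (fun m => (χ : ℂ) * h m + ((lam / 4 : ℝ) : ℂ) * Dx 4 h m) j +
      (ε : ℂ) * conv h (Dx 1 (fun m => (χ : ℂ) * h m + ((lam / 4 : ℝ) : ℂ) * Dx 4 h m)) j) k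

/-- Truncated thin-film nonlinearity `N^N_{δ,ε}(h)`. -/
def NthinN (δ ε χ lam : ℝ) (N : ℕ) (h : Coeffs) : Coeffs :=
  fun k => ((Real.sqrt δ : ℝ) : ℂ) *
    Dx 1 (fun j =>
      Dx 1 (fun m => (χ : ℂ) * h m + ((lam / 4 : ℝ) : ℂ) * Dx 4 (PN N h) m) j +
      (ε : ℂ) * conv h (Dx 1 (fun m => (χ : ℂ) * h m + ((lam / 4 : ℝ) : ℂ) * Dx 4 (PN N h) m)) j) k

/-- Inverse of `L⋆ = I + √δ Θ ∂ₓ⁴`, the multiplier with symbol `(1 + √δ Θ k⁴)⁻¹`. -/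
def LstarInv (δ Θ : ℝ) (f : Coeffs) : Coeffs := fun k =>
  f k / ((1 + Real.sqrt δ * Θ * (k : ℝ) ^ (4 : ℕ) : ℝ) : ℂ)

/-- Continuity of a curve of coefficients with respect to the `A^s` norm, on a set `S ⊆ ℝ`. -/
def ContOnA (s : ℝ) (S : Set ℝ) (h : ℝ → Coeffs) : Prop :=
  ∀ t ∈ S, ∀ ε > 0, ∃ δ > 0, ∀ t' ∈ S, |t' - t| < δ →
    Anorm s (fun k => h t' k - h t k) < ε

/-!
Write `f = L₀ U`. Then `L_h U = N(h)` is the fixed point equation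
`f = N(h) - σΘ I(h, L₀⁻¹ f)` in `ℓ¹`. The symbol of `L₀` dominates the weight
`1 + Θ tanh 1 |k|³`, so `‖L₀⁻¹ f‖_{A⁰} + Θ tanh 1 ‖L₀⁻¹ f‖_{A³} ≤ ‖f‖_{ℓ¹}`. The Fourier symbol
of `I` is `k (k-m)³ (1 - tanh k tanh (k-m))`, and the cancellation in `1 - tanh k tanh (k-m)`
trades the factor `|k|` for `4 |m|`. Young's inequality then gives
`‖I(h, V)‖_{ℓ¹} ≤ 4 ‖h‖_{A¹} ‖V‖_{A³}`, so the fixed point map is a contraction of constant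
`4σ ‖h‖_{A¹} / tanh 1 ≤ 1/2`. The contraction principle in `ℓ¹` yields existence, uniqueness
and `‖f‖_{ℓ¹} ≤ 2 ‖N(h)‖_{ℓ¹} ≤ 2χ ‖h‖_{A¹} (1 + 4σ ‖h‖_{A¹})`, the last step by the same
symbol bound for the quadratic part of `N(h)`.
-/

open Real

namespace Real

theorem tanh_le_tanh {x y : ℝ} (hxy : x ≤ y) : tanh x ≤ tanh y := by
  rw [tanh_eq_sinh_div_cosh, tanh_eq_sinh_div_cosh, div_le_div_iff₀ (cosh_pos _) (cosh_pos _)]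
  have : sinh (x - y) ≤ 0 := by simpa using sinh_le_sinh.mpr (sub_nonpos.mpr hxy)
  rw [sinh_sub] at this
  linarith

theorem tanh_nonneg {x : ℝ} (hx : 0 ≤ x) : 0 ≤ tanh x := by
  simpa using tanh_le_tanh hx

theorem tanh_one_pos : 0 < tanh 1 := by
  rw [tanh_eq_sinh_div_cosh]
  exact div_pos (sinh_pos_iff.mpr one_pos) (cosh_pos 1)

theorem one_sub_tanh_mul_tanh (x y : ℝ) :
    1 - tanh x * tanh y = cosh (x - y) / (cosh x * cosh y) := by
  rw [tanh_eq_sinh_div_cosh, tanh_eq_sinh_div_cosh, cosh_sub]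
  field_simp

theorem cosh_sub_le_two_mul_cosh_mul_cosh (x y : ℝ) : cosh (x - y) ≤ 2 * (cosh x * cosh y) := by
  have := cosh_pos (x + y)
  rw [cosh_add] at this
  rw [cosh_sub]
  linarith

theorem exp_abs_le_two_mul_cosh (x : ℝ) : exp |x| ≤ 2 * cosh x := by
  rw [← cosh_abs, cosh_eq]
  linarith [exp_pos (-|x|)]

theorem cosh_le_exp_abs (x : ℝ) : cosh x ≤ exp |x| := by
  rw [← cosh_abs, cosh_eq]
  linarith [exp_le_exp.mpr (show -|x| ≤ |x| by linarith [abs_nonneg x])]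

/-- The cancellation in the symbol of `I(h, V)`: `1 - tanh x tanh (x - y)` equals
`cosh y / (cosh x cosh (x - y))`, which for fixed `y` decays like `e^{-2|x|}` and absorbs `|x|`. -/
theorem abs_mul_one_sub_tanh_mul_tanh_sub_le {x y : ℝ} (hy : 1 ≤ |y|) :
    |x| * (1 - tanh x * tanh (x - y)) ≤ 4 * |y| := by
  rw [one_sub_tanh_mul_tanh, sub_sub_cancel, mul_div_assoc', div_le_iff₀ (by positivity)]
  rcases le_or_gt |x| (2 * |y|) with hxy | hxy
  · calc |x| * cosh y ≤ (2 * |y|) * (2 * (cosh x * cosh (x - y))) := by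
          gcongr
          simpa using cosh_sub_le_two_mul_cosh_mul_cosh x (x - y)
      _ = 4 * |y| * (cosh x * cosh (x - y)) := by ring
  · have hx : |x| ≤ exp (2 * |x| - 2 * |y|) :=
      (le_add_of_nonneg_right zero_le_one).trans
        ((add_one_le_exp |x|).trans (exp_le_exp.mpr (by linarith)))
    have hxy' : |x| - |y| ≤ |x - y| := abs_sub_abs_le_abs_sub x y
    calc |x| * cosh y ≤ exp (2 * |x| - 2 * |y|) * exp |y| := by
          gcongr
          exact cosh_le_exp_abs y
      _ = exp |x| * exp (|x| - |y|) := by rw [← exp_add, ← exp_add]; ring_nf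
      _ ≤ |y| * (exp |x| * exp |x - y|) := by
          rw [← one_mul (exp |x| * _)]
          gcongr
      _ ≤ |y| * ((2 * cosh x) * (2 * cosh (x - y))) := by
          gcongr
          · exact exp_abs_le_two_mul_cosh x
          · exact exp_abs_le_two_mul_cosh (x - y)
      _ = 4 * |y| * (cosh x * cosh (x - y)) := by ring

end Real

section Convolution

variable {a b : ℤ → ℝ}

theorem hasSum_mul_comp_sub (ha0 : ∀ m, 0 ≤ a m) (hb0 : ∀ i, 0 ≤ b i)
    (ha : Summable a) (hb : Summable b) :
    HasSum (fun p : ℤ × ℤ => a p.2 * b (p.1 - p.2)) ((∑' m, a m) * ∑' i, b i) := by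
  let e : ℤ × ℤ ≃ ℤ × ℤ :=
    ⟨fun q => (q.1 + q.2, q.2), fun p => (p.1 - p.2, p.2), fun q => by simp, fun p => by simp⟩
  have hprod : Summable fun q : ℤ × ℤ => b q.1 * a q.2 := hb.mul_of_nonneg ha hb0 ha0
  rw [← e.hasSum_iff, mul_comm, hb.tsum_mul_tsum ha hprod]
  convert hprod.hasSum using 2 with q
  simp [e, mul_comm]

/-- Young's inequality `‖a * b‖₁ ≤ ‖a‖₁ ‖b‖₁` for a series dominated by a convolution on `ℤ`. -/
theorem summable_norm_and_tsum_norm_le_of_norm_le_mul_comp_sub {E : Type*}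
    [SeminormedAddCommGroup E] {F : ℤ → ℤ → E} {x : ℤ → E}
    (ha0 : ∀ m, 0 ≤ a m) (hb0 : ∀ i, 0 ≤ b i) (ha : Summable a) (hb : Summable b)
    (hF : ∀ k, HasSum (F k) (x k)) (hFab : ∀ k m, ‖F k m‖ ≤ a m * b (k - m)) :
    Summable (fun k => ‖x k‖) ∧ ∑' k, ‖x k‖ ≤ (∑' m, a m) * ∑' i, b i := by
  have hab := hasSum_mul_comp_sub ha0 hb0 ha hb
  have hnn : ∀ p : ℤ × ℤ, 0 ≤ a p.2 * b (p.1 - p.2) := fun p => mul_nonneg (ha0 _) (hb0 _)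
  have hfib : ∀ k, HasSum (fun m => a m * b (k - m)) (∑' m, a m * b (k - m)) := fun k =>
    (((summable_prod_of_nonneg hnn).mp hab.summable).1 k).hasSum
  have hc := hab.prod_fiberwise hfib
  have hle : ∀ k, ‖x k‖ ≤ ∑' m, a m * b (k - m) := fun k =>
    (hF k).norm_le_of_bounded (hfib k) (hFab k)
  have hsx : Summable fun k => ‖x k‖ := hc.summable.of_nonneg_of_le (fun _ => norm_nonneg _) hle
  exact ⟨hsx, (hsx.tsum_le_tsum hle hc.summable).trans hc.tsum_eq.le⟩

end Convolution

theorem lp.norm_eq_tsum_norm {ι E : Type*} [NormedAddCommGroup E] (f : lp (fun _ : ι => E) 1) :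
    ‖f‖ = ∑' i, ‖f i‖ := by
  simp [lp.norm_eq_tsum_rpow (by norm_num : 0 < (1 : ENNReal).toReal)]

theorem exists_summable_fixedPoint_of_contraction {ι E : Type*} [NormedAddCommGroup E]
    [CompleteSpace E] (Ψ : (ι → E) → ι → E) {K : ℝ} (hK0 : 0 ≤ K) (hK1 : K < 1)
    (hΨ : ∀ f, Summable (fun i => ‖f i‖) → Summable fun i => ‖Ψ f i‖)
    (hlip : ∀ f g, Summable (fun i => ‖f i‖) → Summable (fun i => ‖g i‖) →
      ∑' i, ‖Ψ f i - Ψ g i‖ ≤ K * ∑' i, ‖f i - g i‖) :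
    ∃ f, Summable (fun i => ‖f i‖) ∧ Ψ f = f ∧ ∑' i, ‖f i‖ ≤ (∑' i, ‖Ψ 0 i‖) / (1 - K) ∧
      ∀ g, Summable (fun i => ‖g i‖) → Ψ g = g → g = f := by
  have memℓp_one {f : ι → E} (hf : Summable fun i => ‖f i‖) : Memℓp f 1 :=
    memℓp_gen (by simpa using hf)
  have summable_lp (f : lp (fun _ : ι => E) 1) : Summable fun i => ‖f i‖ := by
    simpa using (lp.memℓp f).summable (by norm_num)
  let T : lp (fun _ : ι => E) 1 → lp (fun _ : ι => E) 1 :=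
    fun f => ⟨Ψ f, memℓp_one (hΨ f (summable_lp f))⟩
  have hT : ContractingWith K.toNNReal T := by
    refine ⟨by simpa using hK1, LipschitzWith.of_dist_le_mul fun f g => ?_⟩
    simp only [dist_eq_norm, lp.norm_eq_tsum_norm, lp.coeFn_sub, Pi.sub_apply]
    simpa [hK0] using hlip f g (summable_lp f) (summable_lp g)
  set f := ContractingWith.fixedPoint T hT
  have hf : Function.IsFixedPt T f := hT.fixedPoint_isFixedPt
  refine ⟨f, summable_lp f, congrArg (fun g : lp (fun _ : ι => E) 1 => ⇑g) hf, ?_, ?_⟩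
  · have hT0 : ⇑(T 0) = Ψ 0 := congrArg Ψ (lp.coeFn_zero _ _)
    simpa [dist_eq_norm, lp.norm_eq_tsum_norm, hT0, hK0] using hT.dist_fixedPoint_le 0
  · intro g hg hΨg
    have := hT.fixedPoint_unique (x := ⟨g, memℓp_one hg⟩) (Subtype.ext hΨg)
    exact congrArg (fun g : lp (fun _ : ι => E) 1 => ⇑g) this

section WienerSpace

variable {f : Coeffs}

theorem inA_zero_iff : InA 0 f ↔ Summable fun k => ‖f k‖ := by
  simp [InA]

theorem anorm_zero_eq : Anorm 0 f = ∑' k, ‖f k‖ := by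
  simp [Anorm]

theorem inA_one_iff : InA 1 f ↔ Summable fun k : ℤ => |(k : ℝ)| * ‖f k‖ := by
  simp [InA]

theorem anorm_one_eq : Anorm 1 f = ∑' k : ℤ, |(k : ℝ)| * ‖f k‖ := by
  simp [Anorm]

theorem inA_three_iff : InA 3 f ↔ Summable fun k : ℤ => |(k : ℝ)| ^ 3 * ‖f k‖ := by
  simp [InA]

theorem anorm_three_eq : Anorm 3 f = ∑' k : ℤ, |(k : ℝ)| ^ 3 * ‖f k‖ := by
  simp [Anorm]

theorem anorm_nonneg (s : ℝ) (f : Coeffs) : 0 ≤ Anorm s f :=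
  tsum_nonneg fun _ => by positivity

theorem InA.of_le {s t : ℝ} (hf : InA s f) (hf0 : f 0 = 0) (hts : t ≤ s) : InA t f := by
  refine hf.of_nonneg_of_le (fun _ => by positivity) fun k => ?_
  rcases eq_or_ne k 0 with rfl | hk
  · simp [hf0]
  · have : (1 : ℝ) ≤ |(k : ℝ)| := by exact_mod_cast Int.one_le_abs hk
    gcongr

end WienerSpace

section Multipliers

theorem abs_mul_tanh_abs (x : ℝ) : |x| * tanh |x| = x * tanh x := by
  rcases abs_cases x with ⟨hx, -⟩ | ⟨hx, -⟩ <;> simp [hx, tanh_neg]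

theorem norm_G0_apply_le (f : Coeffs) (k : ℤ) : ‖G0 f k‖ ≤ |(k : ℝ)| * ‖f k‖ := by
  have := tanh_nonneg (abs_nonneg (k : ℝ))
  rw [G0, norm_mul, Complex.norm_real, norm_of_nonneg (by positivity)]
  gcongr
  exact mul_le_of_le_one_right (abs_nonneg _) (tanh_lt_one _).le

theorem norm_Dx_apply (n : ℕ) (f : Coeffs) (k : ℤ) : ‖Dx n f k‖ = |(k : ℝ)| ^ n * ‖f k‖ := by
  simp [Dx]

theorem Dx_zero (f : Coeffs) : Dx 0 f = f := by
  ext k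
  simp [Dx]

theorem G0_apply_zero (f : Coeffs) : G0 f 0 = 0 := by
  simp [G0]

theorem Dx_one_apply_zero (f : Coeffs) : Dx 1 f 0 = 0 := by
  simp [Dx]

theorem I_mul_pow_two_mul (z : ℂ) (j : ℕ) : (Complex.I * z) ^ (2 * j) = (-1) ^ j * z ^ (2 * j) := by
  rw [mul_pow, pow_mul, Complex.I_sq]

end Multipliers

/-- `interaction 1 h V = I(h, V)`, while `interaction 0 h h = G₀(h G₀h) + ∂ₓ(h ∂ₓh)` is the
quadratic part of `N(h)`. -/
def interaction (j : ℕ) (h V : Coeffs) : Coeffs := fun k =>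
  G0 (conv h (G0 (Dx (2 * j) V))) k + Dx 1 (conv h (Dx (2 * j + 1) V)) k

def interactionSymbol (n : ℕ) (k m : ℤ) : ℝ :=
  k * ((k - m : ℤ) : ℝ) ^ n * (1 - tanh k * tanh ((k - m : ℤ) : ℝ))

theorem abs_interactionSymbol_le (n : ℕ) (k : ℤ) {m : ℤ} (hm : m ≠ 0) :
    |interactionSymbol n k m| ≤ 4 * |(m : ℝ)| * |((k - m : ℤ) : ℝ)| ^ n := by
  have hm1 : (1 : ℝ) ≤ |(m : ℝ)| := by exact_mod_cast Int.one_le_abs hm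
  have key := abs_mul_one_sub_tanh_mul_tanh_sub_le (x := k) hm1
  have hnn : 0 ≤ 1 - tanh k * tanh ((k - m : ℤ) : ℝ) := by
    rw [one_sub_tanh_mul_tanh]
    positivity
  rw [← Int.cast_sub] at key
  rw [interactionSymbol, abs_mul, abs_mul, abs_pow, abs_of_nonneg hnn, mul_right_comm]
  gcongr

theorem summable_mul_comp_sub {h g : Coeffs} (hh : Summable fun m => ‖h m‖) {B : ℝ}
    (hg : ∀ i, ‖g i‖ ≤ B) (k : ℤ) : Summable fun m => h m * g (k - m) :=
  (hh.mul_right B).of_norm_bounded fun m => by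
    rw [norm_mul]
    exact mul_le_mul_of_nonneg_left (hg _) (norm_nonneg _)

section Interaction

variable {h V W : Coeffs} {j : ℕ}

theorem hasSum_interaction (hh : Summable fun m => ‖h m‖)
    (hV : Summable fun i : ℤ => |(i : ℝ)| ^ (2 * j + 1) * ‖V i‖) (k : ℤ) :
    HasSum (fun m => (-1) ^ (j + 1) * (interactionSymbol (2 * j + 1) k m : ℂ) * (h m * V (k - m)))
      (interaction j h V k) := by
  have hle : ∀ i : ℤ, |(i : ℝ)| ^ (2 * j + 1) * ‖V i‖ ≤ ∑' i : ℤ, |(i : ℝ)| ^ (2 * j + 1) * ‖V i‖ :=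
    fun i => hV.le_tsum i fun _ _ => by positivity
  have hsum₁ := summable_mul_comp_sub hh (g := G0 (Dx (2 * j) V)) (fun i => by
    refine (norm_G0_apply_le _ i).trans (le_trans (le_of_eq ?_) (hle i))
    rw [norm_Dx_apply, pow_succ]
    ring) k
  have hsum₂ := summable_mul_comp_sub hh (g := Dx (2 * j + 1) V)
    (fun i => (norm_Dx_apply _ _ i).trans_le (hle i)) k
  have hsum := (hsum₁.hasSum.mul_left ((|(k : ℝ)| * tanh |(k : ℝ)| : ℝ) : ℂ)).add
    (hsum₂.hasSum.mul_left (Complex.I * k))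
  have hterm : ∀ m, (-1) ^ (j + 1) * (interactionSymbol (2 * j + 1) k m : ℂ) * (h m * V (k - m)) =
      ((|(k : ℝ)| * tanh |(k : ℝ)| : ℝ) : ℂ) * (h m * G0 (Dx (2 * j) V) (k - m)) +
        Complex.I * k * (h m * Dx (2 * j + 1) V (k - m)) := by
    intro m
    simp only [G0, Dx, interactionSymbol, abs_mul_tanh_abs, pow_succ _ (2 * j), I_mul_pow_two_mul]
    push_cast
    linear_combination -(-1) ^ j * (k : ℂ) * ((k : ℂ) - m) ^ (2 * j + 1) * h m * V (k - m) *
      Complex.I_sq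
  have hval : interaction j h V k =
      ((|(k : ℝ)| * tanh |(k : ℝ)| : ℝ) : ℂ) * ∑' m, h m * G0 (Dx (2 * j) V) (k - m) +
        Complex.I * k * ∑' m, h m * Dx (2 * j + 1) V (k - m) := by
    simp only [interaction, G0, Dx, conv, pow_one]
  simp_rw [hterm, hval]
  exact hsum

theorem norm_interactionTerm_le (h0 : h 0 = 0) (n : ℕ) (k m : ℤ) :
    ‖(-1) ^ (j + 1) * (interactionSymbol n k m : ℂ) * (h m * V (k - m))‖ ≤
      4 * (|(m : ℝ)| * ‖h m‖) * (|((k - m : ℤ) : ℝ)| ^ n * ‖V (k - m)‖) := by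
  rcases eq_or_ne m 0 with rfl | hm
  · simp [h0]
  · rw [norm_mul, norm_mul, norm_mul, norm_pow, norm_neg, norm_one, one_pow, one_mul,
      Complex.norm_real, norm_eq_abs]
    calc |interactionSymbol n k m| * (‖h m‖ * ‖V (k - m)‖)
        ≤ 4 * |(m : ℝ)| * |((k - m : ℤ) : ℝ)| ^ n * (‖h m‖ * ‖V (k - m)‖) := by
          gcongr
          exact abs_interactionSymbol_le n k hm
      _ = _ := by ring

theorem summable_norm_interaction_and_tsum_le (h0 : h 0 = 0) (hh : InA 1 h)
    (hV : Summable fun i : ℤ => |(i : ℝ)| ^ (2 * j + 1) * ‖V i‖) :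
    (Summable fun k => ‖interaction j h V k‖) ∧
      ∑' k, ‖interaction j h V k‖ ≤
        4 * Anorm 1 h * ∑' i : ℤ, |(i : ℝ)| ^ (2 * j + 1) * ‖V i‖ := by
  have hh0 := inA_zero_iff.mp (hh.of_le h0 zero_le_one)
  rw [inA_one_iff] at hh
  rw [anorm_one_eq]
  have := summable_norm_and_tsum_norm_le_of_norm_le_mul_comp_sub (fun _ => by positivity)
    (fun _ => by positivity) (hh.mul_left 4) hV (hasSum_interaction hh0 hV)
    (fun k m => norm_interactionTerm_le h0 _ k m)
  rwa [tsum_mul_left] at this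

theorem interaction_sub (hh : Summable fun m => ‖h m‖)
    (hV : Summable fun i : ℤ => |(i : ℝ)| ^ (2 * j + 1) * ‖V i‖)
    (hW : Summable fun i : ℤ => |(i : ℝ)| ^ (2 * j + 1) * ‖W i‖) :
    interaction j h (V - W) = interaction j h V - interaction j h W := by
  have hVW : Summable fun i : ℤ => |(i : ℝ)| ^ (2 * j + 1) * ‖(V - W) i‖ :=
    (hV.add hW).of_nonneg_of_le (fun _ => by positivity) fun i => by
      rw [← mul_add]
      gcongr
      exact norm_sub_le _ _
  ext k
  refine (hasSum_interaction hh hVW k).unique ?_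
  simpa only [Pi.sub_apply, mul_sub] using
    (hasSum_interaction hh hV k).sub (hasSum_interaction hh hW k)

end Interaction

section Iop

variable {h V W : Coeffs}

theorem Iop_eq_interaction (h V : Coeffs) : Iop h V = interaction 1 h V := by
  ext k
  simp [Iop, interaction]

theorem summable_norm_Iop_and_tsum_le (h0 : h 0 = 0) (hh : InA 1 h) (hV : InA 3 V) :
    (Summable fun k => ‖Iop h V k‖) ∧ ∑' k, ‖Iop h V k‖ ≤ 4 * Anorm 1 h * Anorm 3 V := by
  rw [Iop_eq_interaction, anorm_three_eq]
  exact summable_norm_interaction_and_tsum_le h0 hh (inA_three_iff.mp hV)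

theorem Iop_sub (h0 : h 0 = 0) (hh : InA 1 h) (hV : InA 3 V) (hW : InA 3 W) :
    Iop h (V - W) = Iop h V - Iop h W := by
  simp only [Iop_eq_interaction]
  exact interaction_sub (inA_zero_iff.mp (hh.of_le h0 zero_le_one)) (inA_three_iff.mp hV)
    (inA_three_iff.mp hW)

theorem Iop_zero (h : Coeffs) : Iop h 0 = 0 := by
  ext k
  simp [Iop, G0, Dx, conv]

theorem Iop_apply_zero (h V : Coeffs) : Iop h V 0 = 0 := by
  simp [Iop, G0_apply_zero, Dx_one_apply_zero]

end Iop

section Nop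

variable {χ σ : ℝ} {h : Coeffs}

theorem Nop_eq_interaction (k : ℤ) :
    Nop χ σ h k = -χ * G0 h k + (σ * χ : ℝ) * interaction 0 h h k := by
  simp [Nop, interaction, Dx_zero]

theorem Nop_apply_zero : Nop χ σ h 0 = 0 := by
  simp [Nop, G0_apply_zero, Dx_one_apply_zero]

theorem summable_norm_Nop_and_tsum_le (h0 : h 0 = 0) (hh : InA 1 h) :
    (Summable fun k => ‖Nop χ σ h k‖) ∧
      ∑' k, ‖Nop χ σ h k‖ ≤ |χ| * Anorm 1 h + 4 * |σ * χ| * Anorm 1 h ^ 2 := by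
  obtain ⟨hQ, hQle⟩ := summable_norm_interaction_and_tsum_le (j := 0) h0 hh
    (by simpa [← inA_one_iff] using hh)
  simp only [mul_zero, zero_add, pow_one, ← anorm_one_eq] at hQle
  rw [inA_one_iff] at hh
  have hle : ∀ k, ‖Nop χ σ h k‖ ≤ |χ| * (|(k : ℝ)| * ‖h k‖) + |σ * χ| * ‖interaction 0 h h k‖ :=
    fun k => by
      rw [Nop_eq_interaction]
      refine (norm_add_le _ _).trans ?_
      rw [norm_mul, norm_mul, norm_neg, Complex.norm_real, Complex.norm_real, norm_eq_abs,
        norm_eq_abs]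
      gcongr
      exact norm_G0_apply_le h k
  have hmaj := (hh.mul_left |χ|).add (hQ.mul_left |σ * χ|)
  refine ⟨hmaj.of_nonneg_of_le (fun _ => norm_nonneg _) hle, ?_⟩
  calc ∑' k, ‖Nop χ σ h k‖
      ≤ ∑' k : ℤ, (|χ| * (|(k : ℝ)| * ‖h k‖) + |σ * χ| * ‖interaction 0 h h k‖) :=
        (hmaj.of_nonneg_of_le (fun _ => norm_nonneg _) hle).tsum_le_tsum hle hmaj
    _ = |χ| * Anorm 1 h + |σ * χ| * ∑' k, ‖interaction 0 h h k‖ := by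
        rw [(hh.mul_left _).tsum_add (hQ.mul_left _), tsum_mul_left, tsum_mul_left, anorm_one_eq]
    _ ≤ |χ| * Anorm 1 h + 4 * |σ * χ| * Anorm 1 h ^ 2 := by
        have := mul_le_mul_of_nonneg_left hQle (abs_nonneg (σ * χ))
        nlinarith

end Nop

section L0

variable {Θ : ℝ} {f g : Coeffs}

theorem L0_symbol_pos (hΘ : 0 ≤ Θ) (k : ℤ) :
    0 < 1 + Θ * |(k : ℝ)| ^ 3 * tanh |(k : ℝ)| := by
  have := tanh_nonneg (abs_nonneg (k : ℝ))
  positivity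

theorem one_add_mul_tanh_one_le_L0_symbol (hΘ : 0 ≤ Θ) (k : ℤ) :
    1 + Θ * tanh 1 * |(k : ℝ)| ^ 3 ≤ 1 + Θ * |(k : ℝ)| ^ 3 * tanh |(k : ℝ)| := by
  rcases eq_or_ne k 0 with rfl | hk
  · simp
  · have : (1 : ℝ) ≤ |(k : ℝ)| := by exact_mod_cast Int.one_le_abs hk
    rw [mul_right_comm]
    gcongr
    exact tanh_le_tanh this

theorem L0inv_L0 (hΘ : 0 ≤ Θ) (f : Coeffs) : L0inv Θ (L0 Θ f) = f := by
  ext k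
  exact mul_div_cancel_left₀ _ (Complex.ofReal_ne_zero.mpr (L0_symbol_pos hΘ k).ne')

theorem L0_L0inv (hΘ : 0 ≤ Θ) (f : Coeffs) : L0 Θ (L0inv Θ f) = f := by
  ext k
  exact mul_div_cancel₀ _ (Complex.ofReal_ne_zero.mpr (L0_symbol_pos hΘ k).ne')

theorem L0inv_sub : L0inv Θ (f - g) = L0inv Θ f - L0inv Θ g := by
  ext k
  simp [L0inv, sub_div]

theorem L0inv_apply_zero (f : Coeffs) : L0inv Θ f 0 = f 0 := by
  simp [L0inv]

theorem mul_norm_L0inv_apply_le (hΘ : 0 ≤ Θ) (f : Coeffs) (k : ℤ) :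
    (1 + Θ * tanh 1 * |(k : ℝ)| ^ 3) * ‖L0inv Θ f k‖ ≤ ‖f k‖ := by
  have hpos := L0_symbol_pos hΘ k
  rw [L0inv, norm_div, Complex.norm_real, norm_of_nonneg hpos.le, mul_div_assoc',
    div_le_iff₀ hpos, mul_comm ‖f k‖]
  exact mul_le_mul_of_nonneg_right (one_add_mul_tanh_one_le_L0_symbol hΘ k) (norm_nonneg _)

theorem summable_norm_L0 (hΘ : 0 ≤ Θ) (hf0 : f 0 = 0) (hf : InA 3 f) :
    Summable fun k => ‖L0 Θ f k‖ := by
  have h0 := inA_zero_iff.mp (hf.of_le hf0 (by norm_num))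
  refine (h0.add ((inA_three_iff.mp hf).mul_left Θ)).of_nonneg_of_le (fun _ => norm_nonneg _)
    fun k => ?_
  rw [L0, norm_mul, Complex.norm_real, norm_of_nonneg (L0_symbol_pos hΘ k).le]
  calc (1 + Θ * |(k : ℝ)| ^ 3 * tanh |(k : ℝ)|) * ‖f k‖ ≤ (1 + Θ * |(k : ℝ)| ^ 3) * ‖f k‖ := by
        gcongr ?_ * _
        have : 0 ≤ Θ * |(k : ℝ)| ^ 3 := by positivity
        linarith [mul_le_of_le_one_right this (tanh_lt_one |(k : ℝ)|).le]
    _ = ‖f k‖ + Θ * (|(k : ℝ)| ^ 3 * ‖f k‖) := by ring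

theorem summable_mul_norm_L0inv (hΘ : 0 ≤ Θ) (hf : Summable fun k => ‖f k‖) :
    Summable fun k : ℤ => (1 + Θ * tanh 1 * |(k : ℝ)| ^ 3) * ‖L0inv Θ f k‖ :=
  hf.of_nonneg_of_le (fun _ => mul_nonneg (by have := tanh_one_pos; positivity) (norm_nonneg _))
    (mul_norm_L0inv_apply_le hΘ f)

variable (hΘ : 0 < Θ) (hf : Summable fun k => ‖f k‖)
include hΘ hf

theorem inA_three_L0inv : InA 3 (L0inv Θ f) := by
  have hc : 0 < Θ * tanh 1 := mul_pos hΘ tanh_one_pos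
  rw [inA_three_iff]
  refine ((summable_mul_norm_L0inv hΘ.le hf).mul_left (Θ * tanh 1)⁻¹).of_nonneg_of_le
    (fun _ => by positivity) fun k => ?_
  rw [le_inv_mul_iff₀ hc]
  nlinarith [norm_nonneg (L0inv Θ f k)]

theorem anorm_zero_add_mul_anorm_three_L0inv_le :
    Anorm 0 (L0inv Θ f) + Θ * tanh 1 * Anorm 3 (L0inv Θ f) ≤ ∑' k, ‖f k‖ := by
  have h3 := inA_three_iff.mp (inA_three_L0inv hΘ hf)
  have h0 : Summable fun k => ‖L0inv Θ f k‖ :=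
    (summable_mul_norm_L0inv hΘ.le hf).of_nonneg_of_le (fun _ => norm_nonneg _) fun k =>
      le_mul_of_one_le_left (norm_nonneg _) (by have := tanh_one_pos; simp; positivity)
  rw [anorm_zero_eq, anorm_three_eq, ← tsum_mul_left,
    ← h0.tsum_add (h3.mul_left _)]
  refine (h0.add (h3.mul_left _)).tsum_le_tsum (fun k => ?_) hf
  linarith [mul_norm_L0inv_apply_le hΘ.le f k]

end L0

def ellipticMap (χ Θ σ : ℝ) (h f : Coeffs) : Coeffs := fun k =>
  Nop χ σ h k - ((σ * Θ : ℝ) : ℂ) * Iop h (L0inv Θ f) k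

section EllipticMap

variable {χ Θ σ : ℝ} {h f g : Coeffs}

theorem Lop_L0inv_eq_Nop_iff (hΘ : 0 ≤ Θ) :
    (∀ k, Lop Θ σ h (L0inv Θ f) k = Nop χ σ h k) ↔ ellipticMap χ Θ σ h f = f := by
  rw [funext_iff]
  refine forall_congr' fun k => ?_
  rw [Lop, L0_L0inv hΘ, ellipticMap]
  exact ⟨fun H => by linear_combination -H, fun H => by linear_combination -H⟩

theorem ellipticMap_zero : ellipticMap χ Θ σ h 0 = Nop χ σ h := by
  have : L0inv Θ 0 = 0 := by
    ext k
    simp [L0inv]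
  ext k
  simp [ellipticMap, this, Iop_zero]

theorem ellipticMap_apply_zero : ellipticMap χ Θ σ h f 0 = 0 := by
  simp [ellipticMap, Nop_apply_zero, Iop_apply_zero]

variable (hΘ : 0 < Θ) (h0 : h 0 = 0) (hh : InA 1 h)
include hΘ h0 hh

theorem summable_norm_ellipticMap (hf : Summable fun k => ‖f k‖) :
    Summable fun k => ‖ellipticMap χ Θ σ h f k‖ := by
  have hIop := (summable_norm_Iop_and_tsum_le h0 hh (inA_three_L0inv hΘ hf)).1
  refine ((summable_norm_Nop_and_tsum_le (χ := χ) (σ := σ) h0 hh).1.add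
    (hIop.mul_left |σ * Θ|)).of_nonneg_of_le (fun _ => norm_nonneg _) fun k =>
      (norm_sub_le _ _).trans_eq ?_
  rw [norm_mul, Complex.norm_real, norm_eq_abs]

theorem tsum_norm_ellipticMap_sub_le (hf : Summable fun k => ‖f k‖)
    (hg : Summable fun k => ‖g k‖) :
    ∑' k, ‖ellipticMap χ Θ σ h f k - ellipticMap χ Θ σ h g k‖ ≤
      4 * |σ| / tanh 1 * Anorm 1 h * ∑' k, ‖f k - g k‖ := by
  have hgf : Summable fun k => ‖(g - f) k‖ :=
    (hg.add hf).of_nonneg_of_le (fun _ => norm_nonneg _) fun k => norm_sub_le _ _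
  have hdiff : ∀ k, ellipticMap χ Θ σ h f k - ellipticMap χ Θ σ h g k =
      ((σ * Θ : ℝ) : ℂ) * Iop h (L0inv Θ (g - f)) k := fun k => by
    rw [L0inv_sub, Iop_sub h0 hh (inA_three_L0inv hΘ hg) (inA_three_L0inv hΘ hf)]
    simp only [ellipticMap, Pi.sub_apply]
    ring
  have hIop := (summable_norm_Iop_and_tsum_le h0 hh (inA_three_L0inv hΘ hgf)).2
  have hL0inv := anorm_zero_add_mul_anorm_three_L0inv_le hΘ hgf
  have := anorm_nonneg 0 (L0inv Θ (g - f))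
  have := anorm_nonneg 1 h
  have := tanh_one_pos
  simp_rw [hdiff, norm_mul, Complex.norm_real, norm_eq_abs, Pi.sub_apply, norm_sub_rev (g _)]
    at hL0inv ⊢
  rw [tsum_mul_left, abs_mul, abs_of_pos hΘ]
  calc |σ| * Θ * ∑' k, ‖Iop h (L0inv Θ (g - f)) k‖
      ≤ |σ| * Θ * (4 * Anorm 1 h * Anorm 3 (L0inv Θ (g - f))) := by gcongr
    _ = 4 * |σ| / tanh 1 * Anorm 1 h * (Θ * tanh 1 * Anorm 3 (L0inv Θ (g - f))) := by
        field_simp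
    _ ≤ 4 * |σ| / tanh 1 * Anorm 1 h * ∑' k, ‖f k - g k‖ := by gcongr; linarith

end EllipticMap

/-- for zero-mean `h ∈ A¹` small in `A¹`, the equation `L_h U = N(h)` has a
unique zero-mean solution `U ∈ A³`, with
`‖U‖_{A⁰} + (Θ tanh(1)/2)‖U‖_{A³} ≤ C ‖h‖_{A¹}(1 + ‖h‖_{A¹})`. -/
theorem elliptic_solve_Lh (χ Θ σ : ℝ) (hχ : 0 < χ) (hΘ : 0 < Θ) (hσ : 0 < σ) :
    ∃ C₁ > 0, ∃ C > 0, ∀ h : Coeffs, h 0 = 0 → InA 1 h → Anorm 1 h ≤ C₁ →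
      ∃ U : Coeffs,
        (U 0 = 0 ∧ InA 3 U ∧ (∀ k : ℤ, Lop Θ σ h U k = Nop χ σ h k) ∧
          Anorm 0 U + Θ * Real.tanh 1 / 2 * Anorm 3 U ≤
            C * Anorm 1 h * (1 + Anorm 1 h)) ∧
        (∀ U' : Coeffs, U' 0 = 0 → InA 3 U' →
          (∀ k : ℤ, Lop Θ σ h U' k = Nop χ σ h k) → U' = U) := by
  have ht := tanh_one_pos
  refine ⟨tanh 1 / (8 * σ), by positivity, 2 * χ * (1 + 4 * σ), by positivity, ?_⟩
  intro h h0 hh hsmall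
  have hH := anorm_nonneg 1 h
  have hK : 4 * |σ| / tanh 1 * Anorm 1 h ≤ 1 / 2 := by
    rw [abs_of_pos hσ, div_mul_eq_mul_div, div_le_iff₀ ht]
    rw [le_div_iff₀ (by positivity)] at hsmall
    linarith
  obtain ⟨f, hf, hfix, hfle, huniq⟩ := exists_summable_fixedPoint_of_contraction
    (ellipticMap χ Θ σ h) (K := 1 / 2) (by norm_num) (by norm_num)
    (fun _ => summable_norm_ellipticMap hΘ h0 hh) fun _ _ hf hg =>
      (tsum_norm_ellipticMap_sub_le hΘ h0 hh hf hg).trans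
        (mul_le_mul_of_nonneg_right hK (tsum_nonneg fun _ => norm_nonneg _))
  refine ⟨L0inv Θ f, ⟨?_, inA_three_L0inv hΘ hf, (Lop_L0inv_eq_Nop_iff hΘ.le).mpr hfix, ?_⟩, ?_⟩
  · rw [L0inv_apply_zero, ← hfix, ellipticMap_apply_zero]
  · have hN := (summable_norm_Nop_and_tsum_le (χ := χ) (σ := σ) h0 hh).2
    rw [abs_of_pos hχ, abs_of_pos (mul_pos hσ hχ)] at hN
    rw [ellipticMap_zero] at hfle
    have := anorm_nonneg 3 (L0inv Θ f)
    have := mul_pos hΘ ht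
    calc Anorm 0 (L0inv Θ f) + Θ * tanh 1 / 2 * Anorm 3 (L0inv Θ f)
        ≤ Anorm 0 (L0inv Θ f) + Θ * tanh 1 * Anorm 3 (L0inv Θ f) := by gcongr; linarith
      _ ≤ ∑' k, ‖f k‖ := anorm_zero_add_mul_anorm_three_L0inv_le hΘ hf
      _ ≤ (∑' k, ‖Nop χ σ h k‖) / (1 - 1 / 2) := hfle
      _ ≤ 2 * (χ * Anorm 1 h + 4 * (σ * χ) * Anorm 1 h ^ 2) := by
        rw [show (1 : ℝ) - 1 / 2 = 2⁻¹ by norm_num, div_inv_eq_mul]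
        linarith
      _ ≤ 2 * χ * (1 + 4 * σ) * Anorm 1 h * (1 + Anorm 1 h) := by
        nlinarith [mul_nonneg hχ.le (mul_nonneg hH hH), mul_nonneg (mul_pos hσ hχ).le hH]
  · intro U' hU'0 hU' hU'eq
    have hfix' : ellipticMap χ Θ σ h (L0 Θ U') = L0 Θ U' :=
      (Lop_L0inv_eq_Nop_iff hΘ.le).mp (by rwa [L0inv_L0 hΘ.le])
    rw [← huniq _ (summable_norm_L0 hΘ.le hU'0 hU') hfix', L0inv_L0 hΘ.le]
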